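/- Fix an integer α ≥ 1 and consider the energy plus integral weighted flow time objective, F(S, 𝒥) = Σ_{j∈𝒥} v_j·(c_j^S − r_j). Let 𝒥₁, 𝒥₂ be instances with |𝒥₁| = |𝒥₂|, let π : 𝒥₁ → 𝒥₂ be a bijection, let η, η' ∈ [0,1], and set β = max(4·max_{j} v_j, 2^α − 1). Then: (i) if |r_j − r_{π(j)}| ≤ η', p_j ≤ p_{π(j)}·(1+η) and v_j ≤ v_{π(j)}·(1+η) for all j ∈ 𝒥₁, then OPT(𝒥₁) ≤ (1 + βη)·OPT(𝒥₂) + β·|𝒥₁|·η'; and (ii) if S₁, S₂ are feasible schedules for 𝒥₁, 𝒥₂ such that for all j ∈ 𝒥₁: p_j ≤ p_{π(j)}, v_j ≤ v_{π(j)}, r_j ≥ r_{π(j)} − η', and w_j^{S₁}(t) ≤ w_{π(j)}^{S₂}(t − η') for all t ≥ r_{π(j)} + η', then F(S₁, 𝒥₁) ≤ F(S₂, 𝒥₂) + β·|𝒥₁|·η'. That is, the energy plus integral weighted flow time cost function is max(4·max_j v_j, 2^α − 1)-smooth. -/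

import Mathlib

/-! Given a schedule for `J₂`, run each job `j ∈ J₁` at `1 + η` times the speed that its partner
`π j` received `η'` time units earlier, and stop as soon as `p_j` has been processed. This is
feasible for `J₁`, its energy is at most `(1 + η)^α ≤ 1 + (2^α - 1) η` times the original one,
and every job completes at most `η'` after its partner. Since release times differ by at most
`η'`, each flow time grows by at most `2η'`, at a weighted cost of `2 v_j η' ≤ (β / 2) η'`.
In (ii) the hypothesis on the work profiles gives the same delay of completion times directly. -/

open MeasureTheory Finset
open scoped ENNReal BigOperators Classical

/-- A job: identifier, release time, processing time, weight. -/
structure Job where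
  id : ℕ
  r : ℝ
  p : ℝ
  v : ℝ

noncomputable instance : DecidableEq Job := Classical.decEq _

/-- An instance is valid when release times are nonnegative and processing
times and weights are positive. -/
def ValidInstance (J : Finset Job) : Prop :=
  ∀ j ∈ J, 0 ≤ j.r ∧ 0 < j.p ∧ 0 < j.v

/-- A schedule: speed functions for jobs. -/
abbrev Sched := Job → ℝ → ℝ

/-- `S` is a feasible schedule for the instance `J`. -/
def Feasible (J : Finset Job) (S : Sched) : Prop :=
  ∀ j ∈ J, Measurable (S j) ∧ (∀ t, 0 ≤ S j t) ∧ (∀ t, t < j.r → S j t = 0) ∧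
    (∫ t in Set.Ici j.r, S j t) = j.p

/-- Work profile of job `j` under schedule `S`: remaining work at time `t`. -/
noncomputable def work (S : Sched) (j : Job) (t : ℝ) : ℝ :=
  j.p - ∫ u in Set.Icc j.r t, S j u

/-- Energy consumption of schedule `S` on instance `J`, with exponent `α`. -/
noncomputable def energy (α : ℕ) (J : Finset Job) (S : Sched) : ℝ≥0∞ :=
  ∫⁻ t in Set.Ioi (0 : ℝ), ENNReal.ofReal ((∑ j ∈ J, S j t) ^ α)

/-- Completion time of job `j` under schedule `S`:
`inf {t ≥ r_j : w_j^S(t) = 0}` (equal to `∞` if `j` is never completed). -/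
noncomputable def ctime (S : Sched) (j : Job) : ℝ≥0∞ :=
  ⨅ (t : ℝ) (_ : j.r ≤ t ∧ work S j t = 0), ENNReal.ofReal t

/-- Integral weighted flow time `F(S,𝒥) = Σ_j v_j·(c_j^S − r_j)`. -/
noncomputable def wFlowTime (S : Sched) (J : Finset Job) : ℝ≥0∞ :=
  ∑ j ∈ J, ENNReal.ofReal j.v * (ctime S j - ENNReal.ofReal j.r)

/-- Energy plus integral weighted flow time cost. -/
noncomputable def cost (α : ℕ) (S : Sched) (J : Finset Job) : ℝ≥0∞ :=
  energy α J S + wFlowTime S J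

/-- Optimal (offline) energy plus integral weighted flow time cost. -/
noncomputable def OPT (α : ℕ) (J : Finset Job) : ℝ≥0∞ :=
  ⨅ (S : Sched) (_ : Feasible J S), cost α S J

/-- The maximum weight `max_j v_j` of a job of `J`. -/
noncomputable def maxV (J : Finset Job) : ℝ :=
  J.fold max 0 Job.v


lemma one_add_pow_le_one_add_mul (n : ℕ) {η : ℝ} (h₀ : 0 ≤ η) (h₁ : η ≤ 1) :
    (1 + η) ^ n ≤ 1 + (2 ^ n - 1) * η := by
  induction n with
  | zero => norm_num
  | succ n ih =>
    have h2 : (1 : ℝ) ≤ 2 ^ n := one_le_pow₀ one_le_two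
    rw [pow_succ, pow_succ]
    nlinarith [mul_le_mul_of_nonneg_right ih (by linarith : (0 : ℝ) ≤ 1 + η),
      mul_nonneg (sub_nonneg.2 h2) (mul_nonneg h₀ (sub_nonneg.2 h₁))]

lemma sum_comp_eq_of_bijOn {ι κ M : Type*} [AddCommMonoid M] {s : Finset ι} {t : Finset κ}
    {π : ι → κ} (hπ : Set.BijOn π s t) (f : κ → M) : ∑ i ∈ s, f (π i) = ∑ k ∈ t, f k :=
  sum_nbij π hπ.mapsTo hπ.injOn hπ.surjOn fun _ _ => rfl

lemma exists_setIntegral_Icc_eq {g : ℝ → ℝ} {r p : ℝ} (hg : IntegrableOn g (Set.Ici r))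
    (hp : 0 ≤ p) (hpg : p < ∫ t in Set.Ici r, g t) : ∃ c, ∫ t in Set.Icc r c, g t = p := by
  have hlim : Filter.Tendsto (fun T => ∫ t in Set.Icc r T, g t) Filter.atTop
      (nhds (∫ t in Set.Ici r, g t)) := by
    simpa only [Set.iUnion_Icc_right] using
      tendsto_setIntegral_of_monotone (fun _ => measurableSet_Icc)
        (fun _ _ h => Set.Icc_subset_Icc_right h) (by rwa [Set.iUnion_Icc_right])
  obtain ⟨b, hpb, hrb⟩ :=
    ((hlim.eventually (eventually_gt_nhds hpg)).and (Filter.eventually_ge_atTop r)).exists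
  obtain ⟨c, -, hc⟩ := intermediate_value_Icc hrb
    (intervalIntegral.continuousOn_primitive_Icc (hg.mono_set Set.Icc_subset_Ici_self))
    ⟨by simpa using hp, hpb.le⟩
  exact ⟨c, hc⟩

lemma exists_le_setIntegral_eq {g : ℝ → ℝ} {r p : ℝ} (hgm : Measurable g) (hg₀ : ∀ t, 0 ≤ g t)
    (hg : IntegrableOn g (Set.Ici r)) (hp : 0 ≤ p) (hpg : p ≤ ∫ t in Set.Ici r, g t) :
    ∃ h : ℝ → ℝ, Measurable h ∧ (∀ t, 0 ≤ h t) ∧ (∀ t, h t ≤ g t) ∧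
      ∫ t in Set.Ici r, h t = p ∧
      ∀ T, p ≤ ∫ t in Set.Icc r T, g t → ∫ t in Set.Icc r T, h t = p := by
  rcases hpg.eq_or_lt with hpg | hpg
  · refine ⟨g, hgm, hg₀, fun _ => le_rfl, hpg.symm, fun T hT => le_antisymm ?_ hT⟩
    exact hpg ▸ setIntegral_mono_set hg (ae_of_all _ fun t => hg₀ t)
      Set.Icc_subset_Ici_self.eventuallyLE
  obtain ⟨c, hc⟩ := exists_setIntegral_Icc_eq hg hp hpg
  refine ⟨(Set.Iic c).indicator g, hgm.indicator measurableSet_Iic,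
    Set.indicator_nonneg fun t _ => hg₀ t, Set.indicator_le_self' fun t _ => hg₀ t, ?_,
    fun T hT => ?_⟩
  · rw [setIntegral_indicator measurableSet_Iic, Set.Ici_inter_Iic, hc]
  rw [setIntegral_indicator measurableSet_Iic]
  rcases le_total c T with hcT | hTc
  · rwa [show Set.Icc r T ∩ Set.Iic c = Set.Icc r c by
      ext t
      simp only [Set.mem_inter_iff, Set.mem_Icc, Set.mem_Iic]
      exact ⟨fun h => ⟨h.1.1, h.2⟩, fun h => ⟨⟨h.1, h.2.trans hcT⟩, h.2⟩⟩]
  · rw [Set.inter_eq_left.2 fun t ht => ht.2.trans hTc]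
    exact le_antisymm (hc ▸ setIntegral_mono_set (hg.mono_set Set.Icc_subset_Ici_self)
      (ae_of_all _ fun t => hg₀ t) (Set.Icc_subset_Icc_right hTc).eventuallyLE) hT

lemma setLIntegral_Ioi_comp_sub_le {f : ℝ → ℝ≥0∞} {a : ℝ} (hf : ∀ u < a, f u = 0) (d : ℝ) :
    ∫⁻ t in Set.Ioi a, f (t - d) ≤ ∫⁻ t in Set.Ioi a, f t :=
  calc ∫⁻ t in Set.Ioi a, f (t - d)
      ≤ ∫⁻ t, f (t - d) := setLIntegral_le_lintegral _ _
    _ = ∫⁻ t, f t := lintegral_sub_right_eq_self f d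
    _ = ∫⁻ t in Set.Ici a, f t :=
      (setLIntegral_eq_of_support_subset fun u hu => not_lt.1 fun h => hu (hf u h)).symm
    _ = ∫⁻ t in Set.Ioi a, f t := setLIntegral_congr Ioi_ae_eq_Ici.symm

lemma maxV_nonneg (J : Finset Job) : 0 ≤ maxV J :=
  (le_fold_max _).2 (Or.inl le_rfl)

lemma le_maxV {J : Finset Job} {j : Job} (hj : j ∈ J) : j.v ≤ maxV J :=
  (le_fold_max _).2 (Or.inr ⟨j, hj, le_rfl⟩)

structure FeasibleSpeed (j : Job) (s : ℝ → ℝ) : Prop where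
  measurable : Measurable s
  nonneg : ∀ t, 0 ≤ s t
  eq_zero_of_lt : ∀ t, t < j.r → s t = 0
  setIntegral_Ici : ∫ t in Set.Ici j.r, s t = j.p

lemma feasible_iff {J : Finset Job} {S : Sched} :
    Feasible J S ↔ ∀ j ∈ J, FeasibleSpeed j (S j) :=
  ⟨fun h j hj => let ⟨h₁, h₂, h₃, h₄⟩ := h j hj; ⟨h₁, h₂, h₃, h₄⟩,
    fun h j hj => let ⟨h₁, h₂, h₃, h₄⟩ := h j hj; ⟨h₁, h₂, h₃, h₄⟩⟩

lemma Feasible.speed {J : Finset Job} {S : Sched} (hS : Feasible J S) {j : Job} (hj : j ∈ J) :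
    FeasibleSpeed j (S j) :=
  feasible_iff.1 hS j hj

namespace FeasibleSpeed

variable {j : Job} {s : ℝ → ℝ}

lemma integrable (hs : FeasibleSpeed j s) (hp : 0 < j.p) : Integrable s :=
  IntegrableOn.integrable_of_forall_notMem_eq_zero (s := Set.Ici j.r)
    (Integrable.of_integral_ne_zero (hs.setIntegral_Ici ▸ hp.ne'))
    fun t ht => hs.eq_zero_of_lt t (not_le.1 ht)

lemma integral_eq (hs : FeasibleSpeed j s) : ∫ t, s t = j.p := by
  rw [← hs.setIntegral_Ici,
    setIntegral_eq_integral_of_forall_compl_eq_zero (s := Set.Ici j.r)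
      fun t ht => hs.eq_zero_of_lt t (not_le.1 ht)]

lemma setIntegral_Icc_mono (hs : FeasibleSpeed j s) (hp : 0 < j.p) :
    Monotone fun t => ∫ u in Set.Icc j.r t, s u :=
  fun _ _ hab => setIntegral_mono_set (hs.integrable hp).integrableOn
    (ae_of_all _ fun u => hs.nonneg u) (Set.Icc_subset_Icc_right hab).eventuallyLE

lemma setIntegral_Icc_le (hs : FeasibleSpeed j s) (hp : 0 < j.p) (t : ℝ) :
    ∫ u in Set.Icc j.r t, s u ≤ j.p :=
  hs.setIntegral_Ici ▸ setIntegral_mono_set (hs.integrable hp).integrableOn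
    (ae_of_all _ fun u => hs.nonneg u) Set.Icc_subset_Ici_self.eventuallyLE

lemma exists_le_comp_sub {i : Job} (hs : FeasibleSpeed i s) (hi : 0 < i.p) (hj : 0 ≤ j.p)
    {κ d : ℝ} (hκ : 0 ≤ κ) (hr : j.r ≤ i.r + d) (hp : j.p ≤ i.p * κ) :
    ∃ h, FeasibleSpeed j h ∧ (∀ t, h t ≤ κ * s (t - d)) ∧
      ∀ c, ∫ t in Set.Icc i.r c, s t = i.p → ∫ t in Set.Icc j.r (c + d), h t = j.p := by
  set g : ℝ → ℝ := fun t => κ * s (t - d)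
  have hg₀ : ∀ t, 0 ≤ g t := fun t => mul_nonneg hκ (hs.nonneg _)
  have hg_lt : ∀ t, t < j.r → g t = 0 := fun t ht => by
    simp only [g, hs.eq_zero_of_lt (t - d) (by linarith), mul_zero]
  have hg : Integrable g := ((hs.integrable hi).comp_sub_right d).const_mul κ
  have hg_Ici : ∫ t in Set.Ici j.r, g t = i.p * κ := by
    rw [setIntegral_eq_integral_of_forall_compl_eq_zero (s := Set.Ici j.r)
        fun t ht => hg_lt t (not_le.1 ht),
      integral_const_mul, integral_sub_right_eq_self, hs.integral_eq, mul_comm]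
  have hg_Icc : ∀ c, ∫ t in Set.Icc i.r c, s t = i.p →
      i.p * κ ≤ ∫ t in Set.Icc j.r (c + d), g t := fun c hc =>
    calc i.p * κ = ∫ t in Set.Icc (i.r + d) (c + d), g t := by
          rw [integral_const_mul, ← Set.preimage_sub_const_Icc,
            (measurePreserving_sub_right volume d).setIntegral_preimage_emb
              (measurableEmbedding_subRight d), hc, mul_comm]
      _ ≤ ∫ t in Set.Icc j.r (c + d), g t := setIntegral_mono_set hg.integrableOn
          (ae_of_all _ hg₀) (Set.Icc_subset_Icc_left hr).eventuallyLE
  obtain ⟨h, hm, h₀, hle, hint, hcum⟩ := exists_le_setIntegral_eq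
    ((hs.measurable.comp (measurable_id.sub_const d)).const_mul κ) hg₀ hg.integrableOn hj
    (hg_Ici ▸ hp)
  exact ⟨h, ⟨hm, h₀, fun t ht => le_antisymm ((hle t).trans_eq (hg_lt t ht)) (h₀ t), hint⟩,
    hle, fun c hc => hcum _ (hp.trans (hg_Icc c hc))⟩

end FeasibleSpeed

section Work

variable {S : Sched} {j : Job}

lemma work_eq_zero_iff {t : ℝ} : work S j t = 0 ↔ ∫ u in Set.Icc j.r t, S j u = j.p :=
  sub_eq_zero.trans eq_comm

lemma work_release : work S j j.r = j.p := by
  simp [work]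

lemma work_nonneg (hs : FeasibleSpeed j (S j)) (hp : 0 < j.p) (t : ℝ) : 0 ≤ work S j t :=
  sub_nonneg.2 (hs.setIntegral_Icc_le hp t)

lemma work_eq_zero_of_le (hs : FeasibleSpeed j (S j)) (hp : 0 < j.p) {c t : ℝ}
    (hc : work S j c = 0) (hct : c ≤ t) : work S j t = 0 :=
  le_antisymm (hc ▸ sub_le_sub_left (hs.setIntegral_Icc_mono hp hct) _) (work_nonneg hs hp t)

lemma ctime_le {t : ℝ} (h₁ : j.r ≤ t) (h₂ : work S j t = 0) : ctime S j ≤ ENNReal.ofReal t :=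
  iInf₂_le t ⟨h₁, h₂⟩

lemma ctime_le_ctime_add {S₁ S₂ : Sched} {j₁ j₂ : Job} {d : ℝ} (hd : 0 ≤ d) (hr : 0 ≤ j₂.r)
    (h : ∀ c, j₂.r ≤ c → work S₂ j₂ c = 0 → j₁.r ≤ c + d ∧ work S₁ j₁ (c + d) = 0) :
    ctime S₁ j₁ ≤ ctime S₂ j₂ + ENNReal.ofReal d := by
  simp only [ctime, ENNReal.iInf_add]
  refine le_iInf₂ fun c hc => ?_
  rw [← ENNReal.ofReal_add (hr.trans hc.1) hd]
  exact ctime_le (h c hc.1 hc.2).1 (h c hc.1 hc.2).2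

lemma ctime_le_of_work_le {S₁ S₂ : Sched} {i : Job} {d : ℝ} (hs₁ : FeasibleSpeed j (S₁ j))
    (hs₂ : FeasibleSpeed i (S₂ i)) (hj : 0 < j.p) (hi : 0 < i.p) (hi₀ : 0 ≤ i.r) (hd : 0 ≤ d)
    (hw : ∀ t, i.r + d ≤ t → work S₁ j t ≤ work S₂ i (t - d)) :
    ctime S₁ j ≤ ctime S₂ i + ENNReal.ofReal d := by
  refine ctime_le_ctime_add hd hi₀ fun c hc hwc => ?_
  have hrel : j.r ≤ c + d := by
    by_contra! hlt
    have h := hw j.r (by linarith)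
    rw [work_release, work_eq_zero_of_le hs₂ hi hwc (by linarith)] at h
    linarith
  refine ⟨hrel, le_antisymm ?_ (work_nonneg hs₁ hj _)⟩
  simpa [hwc] using hw (c + d) (by linarith)

end Work

lemma weighted_flow_le_of_delay {c₁ c₂ : ℝ≥0∞} {r₁ r₂ v₁ v₂ d : ℝ} (hr₁ : 0 ≤ r₁) (hd : 0 ≤ d)
    (hv₁ : 0 ≤ v₁) (hv : v₁ ≤ v₂) (hr : r₂ ≤ r₁ + d) (hc : c₁ ≤ c₂ + ENNReal.ofReal d) :
    ENNReal.ofReal v₁ * (c₁ - ENNReal.ofReal r₁) ≤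
      ENNReal.ofReal v₂ * (c₂ - ENNReal.ofReal r₂) + ENNReal.ofReal (v₁ * (2 * d)) := by
  have key : c₁ - ENNReal.ofReal r₁ ≤ (c₂ - ENNReal.ofReal r₂) + ENNReal.ofReal (2 * d) := by
    rw [tsub_le_iff_right]
    calc c₁ ≤ c₂ + ENNReal.ofReal d := hc
      _ ≤ (c₂ - ENNReal.ofReal r₂) + ENNReal.ofReal r₂ + ENNReal.ofReal d := by
        gcongr; exact le_tsub_add
      _ ≤ (c₂ - ENNReal.ofReal r₂) + ENNReal.ofReal (r₁ + d) + ENNReal.ofReal d := by gcongr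
      _ = (c₂ - ENNReal.ofReal r₂) + ENNReal.ofReal (2 * d) + ENNReal.ofReal r₁ := by
        rw [ENNReal.ofReal_add hr₁ hd, two_mul, ENNReal.ofReal_add hd hd]; ring
  calc ENNReal.ofReal v₁ * (c₁ - ENNReal.ofReal r₁)
      ≤ ENNReal.ofReal v₁ * ((c₂ - ENNReal.ofReal r₂) + ENNReal.ofReal (2 * d)) := by gcongr
    _ ≤ ENNReal.ofReal v₂ * (c₂ - ENNReal.ofReal r₂) + ENNReal.ofReal (v₁ * (2 * d)) := by
      rw [mul_add, ← ENNReal.ofReal_mul hv₁]; gcongr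

lemma wFlowTime_le_of_ctime_le {S₁ S₂ : Sched} {J₁ J₂ : Finset Job} {π : Job → Job}
    (hπ : Set.BijOn π J₁ J₂) {κ d : ℝ} (hκ : 0 ≤ κ) (hd : 0 ≤ d)
    (hJ₁ : ∀ j ∈ J₁, 0 ≤ j.r ∧ 0 ≤ j.v) (hv : ∀ j ∈ J₁, j.v ≤ (π j).v * κ)
    (hr : ∀ j ∈ J₁, (π j).r ≤ j.r + d)
    (hc : ∀ j ∈ J₁, ctime S₁ j ≤ ctime S₂ (π j) + ENNReal.ofReal d) :
    wFlowTime S₁ J₁ ≤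
      ENNReal.ofReal κ * wFlowTime S₂ J₂ + J₁.card * ENNReal.ofReal (maxV J₁ * (2 * d)) := by
  have hterm : ∀ j ∈ J₁, ENNReal.ofReal j.v * (ctime S₁ j - ENNReal.ofReal j.r) ≤
      ENNReal.ofReal κ * (ENNReal.ofReal (π j).v * (ctime S₂ (π j) - ENNReal.ofReal (π j).r)) +
        ENNReal.ofReal (maxV J₁ * (2 * d)) := fun j hj => by
    refine (weighted_flow_le_of_delay (hJ₁ j hj).1 hd (hJ₁ j hj).2 (hv j hj) (hr j hj)
      (hc j hj)).trans ?_
    rw [ENNReal.ofReal_mul' hκ, mul_comm (ENNReal.ofReal _), mul_assoc]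
    gcongr
    exact le_maxV hj
  calc wFlowTime S₁ J₁
      ≤ ∑ j ∈ J₁, (ENNReal.ofReal κ * (ENNReal.ofReal (π j).v *
          (ctime S₂ (π j) - ENNReal.ofReal (π j).r)) + ENNReal.ofReal (maxV J₁ * (2 * d))) :=
        sum_le_sum hterm
    _ = ENNReal.ofReal κ * wFlowTime S₂ J₂ + J₁.card * ENNReal.ofReal (maxV J₁ * (2 * d)) := by
      rw [sum_add_distrib, ← mul_sum, sum_const, nsmul_eq_mul, wFlowTime,
        sum_comp_eq_of_bijOn hπ fun i => ENNReal.ofReal i.v * (ctime S₂ i - ENNReal.ofReal i.r)]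

lemma energy_le_of_le_comp_sub {α : ℕ} (hα : α ≠ 0) {J₁ J₂ : Finset Job} {π : Job → Job}
    (hπ : Set.BijOn π J₁ J₂) {S₁ S₂ : Sched} {κ d : ℝ} (hκ : 0 ≤ κ)
    (h₁ : ∀ j ∈ J₁, ∀ t, 0 ≤ S₁ j t) (hle : ∀ j ∈ J₁, ∀ t, S₁ j t ≤ κ * S₂ (π j) (t - d))
    (h₂ : ∀ j ∈ J₂, ∀ t < 0, S₂ j t = 0) :
    energy α J₁ S₁ ≤ ENNReal.ofReal (κ ^ α) * energy α J₂ S₂ := by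
  set F : ℝ → ℝ≥0∞ := fun u => ENNReal.ofReal ((∑ j ∈ J₂, S₂ j u) ^ α)
  have hpt : ∀ t, ENNReal.ofReal ((∑ j ∈ J₁, S₁ j t) ^ α) ≤
      ENNReal.ofReal (κ ^ α) * F (t - d) := fun t => by
    rw [← ENNReal.ofReal_mul (pow_nonneg hκ α), ← mul_pow, mul_sum,
      ← sum_comp_eq_of_bijOn hπ fun i => κ * S₂ i (t - d)]
    gcongr with j hj
    · exact sum_nonneg fun j hj => h₁ j hj t
    · exact hle j hj t
  have hF : ∀ u < 0, F u = 0 := fun u hu => by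
    simp [F, sum_eq_zero fun j hj => h₂ j hj u hu, hα]
  calc energy α J₁ S₁
      ≤ ∫⁻ t in Set.Ioi 0, ENNReal.ofReal (κ ^ α) * F (t - d) := lintegral_mono hpt
    _ = ENNReal.ofReal (κ ^ α) * ∫⁻ t in Set.Ioi 0, F (t - d) :=
      lintegral_const_mul' _ _ ENNReal.ofReal_ne_top
    _ ≤ ENNReal.ofReal (κ ^ α) * energy α J₂ S₂ := by
      gcongr; exact setLIntegral_Ioi_comp_sub_le hF d

lemma le_mul_OPT_add {α : ℕ} {J : Finset Job} {x a b : ℝ≥0∞} (ha₀ : a ≠ 0) (ha : a ≠ ⊤)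
    (h : ∀ S, Feasible J S → x ≤ a * cost α S J + b) : x ≤ a * OPT α J + b := by
  simpa only [OPT, ENNReal.mul_iInf_of_ne ha₀ ha, ENNReal.iInf_add] using le_iInf₂ h

lemma exists_feasible_le_comp_sub {J₁ J₂ : Finset Job} {π : Job → Job}
    (hπ : Set.MapsTo π J₁ J₂) (hv₁ : ValidInstance J₁) (hv₂ : ValidInstance J₂) {S₂ : Sched}
    (hS₂ : Feasible J₂ S₂) {κ d : ℝ} (hκ : 0 ≤ κ) (hd : 0 ≤ d)
    (hr : ∀ j ∈ J₁, j.r ≤ (π j).r + d) (hp : ∀ j ∈ J₁, j.p ≤ (π j).p * κ) :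
    ∃ S₁, Feasible J₁ S₁ ∧ (∀ j ∈ J₁, ∀ t, S₁ j t ≤ κ * S₂ (π j) (t - d)) ∧
      ∀ j ∈ J₁, ctime S₁ j ≤ ctime S₂ (π j) + ENNReal.ofReal d := by
  have key : ∀ j ∈ J₁, ∃ h, FeasibleSpeed j h ∧ (∀ t, h t ≤ κ * S₂ (π j) (t - d)) ∧
      ∀ c, ∫ t in Set.Icc (π j).r c, S₂ (π j) t = (π j).p →
        ∫ t in Set.Icc j.r (c + d), h t = j.p := fun j hj =>
    (hS₂.speed (hπ hj)).exists_le_comp_sub (hv₂ _ (hπ hj)).2.1 (hv₁ j hj).2.1.le hκ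
      (hr j hj) (hp j hj)
  choose! S₁ hS₁ using key
  refine ⟨S₁, feasible_iff.2 fun j hj => (hS₁ j hj).1, fun j hj => (hS₁ j hj).2.1,
    fun j hj => ctime_le_ctime_add hd (hv₂ _ (hπ hj)).1 fun c hc hwc => ⟨?_, ?_⟩⟩
  · linarith [hr j hj]
  · exact work_eq_zero_iff.2 ((hS₁ j hj).2.2 c (work_eq_zero_iff.1 hwc))

lemma OPT_le_of_perturbation {α : ℕ} (hα : α ≠ 0) {J₁ J₂ : Finset Job}
    (hv₁ : ValidInstance J₁) (hv₂ : ValidInstance J₂) {π : Job → Job} (hπ : Set.BijOn π J₁ J₂)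
    {κ d : ℝ} (hκ : 1 ≤ κ) (hd : 0 ≤ d)
    (hjob : ∀ j ∈ J₁, |j.r - (π j).r| ≤ d ∧ j.p ≤ (π j).p * κ ∧ j.v ≤ (π j).v * κ) :
    OPT α J₁ ≤
      ENNReal.ofReal (κ ^ α) * OPT α J₂ + J₁.card * ENNReal.ofReal (maxV J₁ * (2 * d)) := by
  refine le_mul_OPT_add (by simp; positivity) ENNReal.ofReal_ne_top fun S₂ hS₂ => ?_
  obtain ⟨S₁, hS₁, hle, hc⟩ := exists_feasible_le_comp_sub hπ.mapsTo hv₁ hv₂ hS₂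
    (by linarith) hd (fun j hj => by linarith [abs_le.1 (hjob j hj).1])
    (fun j hj => (hjob j hj).2.1)
  have hE := energy_le_of_le_comp_sub hα hπ (by linarith)
    (fun j hj => (hS₁.speed hj).nonneg) hle
    (fun j hj t ht => (hS₂.speed hj).eq_zero_of_lt t (ht.trans_le (hv₂ j hj).1))
  have hF := wFlowTime_le_of_ctime_le hπ (by linarith) hd
    (fun j hj => ⟨(hv₁ j hj).1, (hv₁ j hj).2.2.le⟩) (fun j hj => (hjob j hj).2.2)
    (fun j hj => by linarith [abs_le.1 (hjob j hj).1]) hc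
  have hκα : ENNReal.ofReal κ ≤ ENNReal.ofReal (κ ^ α) := by
    gcongr; exact le_self_pow₀ hκ hα
  calc OPT α J₁ ≤ cost α S₁ J₁ := iInf₂_le S₁ hS₁
    _ ≤ ENNReal.ofReal (κ ^ α) * energy α J₂ S₂ + (ENNReal.ofReal κ * wFlowTime S₂ J₂ +
        J₁.card * ENNReal.ofReal (maxV J₁ * (2 * d))) := add_le_add hE hF
    _ ≤ _ := by rw [cost, mul_add, ← add_assoc]; gcongr

theorem weighted_flow_time_smooth_general (α : ℕ) (hα : 1 ≤ α)
    (J₁ J₂ : Finset Job) (hv₁ : ValidInstance J₁) (hv₂ : ValidInstance J₂)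
    (π : Job → Job) (hπ : Set.BijOn π ↑J₁ ↑J₂)
    (η η' : ℝ) (hη₀ : 0 ≤ η) (hη₁ : η ≤ 1) (hη'₀ : 0 ≤ η')
    (β : ℝ) (hβ : β = max (4 * maxV J₁) ((2 : ℝ) ^ α - 1)) :
    ((∀ j ∈ J₁, |j.r - (π j).r| ≤ η' ∧ j.p ≤ (π j).p * (1 + η) ∧
        j.v ≤ (π j).v * (1 + η)) →
      OPT α J₁ ≤ ENNReal.ofReal (1 + β * η) * OPT α J₂ +
        ENNReal.ofReal (β * (J₁.card : ℝ) * η')) ∧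
    (∀ S₁ S₂ : Sched, Feasible J₁ S₁ → Feasible J₂ S₂ →
      (∀ j ∈ J₁, j.p ≤ (π j).p ∧ j.v ≤ (π j).v ∧ (π j).r - η' ≤ j.r ∧
        ∀ t : ℝ, (π j).r + η' ≤ t → work S₁ j t ≤ work S₂ (π j) (t - η')) →
      wFlowTime S₁ J₁ ≤ wFlowTime S₂ J₂ + ENNReal.ofReal (β * (J₁.card : ℝ) * η')) := by
  have herr : (J₁.card : ℝ≥0∞) * ENNReal.ofReal (maxV J₁ * (2 * η')) ≤
      ENNReal.ofReal (β * J₁.card * η') := by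
    rw [← ENNReal.ofReal_natCast, ← ENNReal.ofReal_mul (Nat.cast_nonneg _)]
    refine ENNReal.ofReal_le_ofReal ?_
    nlinarith [maxV_nonneg J₁, hβ ▸ le_max_left (4 * maxV J₁) (2 ^ α - 1),
      mul_nonneg (Nat.cast_nonneg (α := ℝ) J₁.card) hη'₀]
  refine ⟨fun hjob => ?_, fun S₁ S₂ hS₁ hS₂ hdom => ?_⟩
  · have hpow : (1 + η) ^ α ≤ 1 + β * η := (one_add_pow_le_one_add_mul α hη₀ hη₁).trans
      (by gcongr; exact hβ ▸ le_max_right _ _)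
    calc OPT α J₁
        ≤ ENNReal.ofReal ((1 + η) ^ α) * OPT α J₂ +
            J₁.card * ENNReal.ofReal (maxV J₁ * (2 * η')) :=
          OPT_le_of_perturbation (by omega) hv₁ hv₂ hπ (by linarith) hη'₀ hjob
      _ ≤ _ := by gcongr
  · calc wFlowTime S₁ J₁
        ≤ ENNReal.ofReal 1 * wFlowTime S₂ J₂ + J₁.card * ENNReal.ofReal (maxV J₁ * (2 * η')) :=
          wFlowTime_le_of_ctime_le hπ zero_le_one hη'₀
            (fun j hj => ⟨(hv₁ j hj).1, (hv₁ j hj).2.2.le⟩)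
            (fun j hj => (mul_one (π j).v).symm ▸ (hdom j hj).2.1)
            (fun j hj => by linarith [(hdom j hj).2.2.1])
            (fun j hj => ctime_le_of_work_le (hS₁.speed hj) (hS₂.speed (hπ.mapsTo hj))
              (hv₁ j hj).2.1 (hv₂ _ (hπ.mapsTo hj)).2.1 (hv₂ _ (hπ.mapsTo hj)).1 hη'₀
              (hdom j hj).2.2.2)
      _ ≤ _ := by rw [ENNReal.ofReal_one, one_mul]; gcongr

/-- **Lemma D.1.** The energy plus integral weighted flow time objective is
`β`-smooth with `β = max(4·max_j v_j, 2^α − 1)`: (i) the optimal cost is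
smooth under small perturbations of the jobs, and (ii) the weighted flow time
of dominated, slightly shifted work profiles is controlled. -/
theorem weighted_flow_time_smooth (α : ℕ) (hα : 1 ≤ α)
    (J₁ J₂ : Finset Job) (hv₁ : ValidInstance J₁) (hv₂ : ValidInstance J₂)
    (hcard : J₁.card = J₂.card)
    (π : Job → Job) (hπ : Set.BijOn π ↑J₁ ↑J₂)
    (η η' : ℝ) (hη₀ : 0 ≤ η) (hη₁ : η ≤ 1) (hη'₀ : 0 ≤ η') (hη'₁ : η' ≤ 1)
    (β : ℝ) (hβ : β = max (4 * maxV J₁) ((2 : ℝ) ^ α - 1)) :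
    ((∀ j ∈ J₁, |j.r - (π j).r| ≤ η' ∧ j.p ≤ (π j).p * (1 + η) ∧
        j.v ≤ (π j).v * (1 + η)) →
      OPT α J₁ ≤ ENNReal.ofReal (1 + β * η) * OPT α J₂ +
        ENNReal.ofReal (β * (J₁.card : ℝ) * η')) ∧
    (∀ S₁ S₂ : Sched, Feasible J₁ S₁ → Feasible J₂ S₂ →
      (∀ j ∈ J₁, j.p ≤ (π j).p ∧ j.v ≤ (π j).v ∧ (π j).r - η' ≤ j.r ∧
        ∀ t : ℝ, (π j).r + η' ≤ t → work S₁ j t ≤ work S₂ (π j) (t - η')) →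
      wFlowTime S₁ J₁ ≤ wFlowTime S₂ J₂ + ENNReal.ofReal (β * (J₁.card : ℝ) * η')) :=
  weighted_flow_time_smooth_general α hα J₁ J₂ hv₁ hv₂ π hπ η η' hη₀ hη₁ hη'₀ β hβ
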